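/- arXiv:1111.7207 — 3 statements merged into one kernel-verified Lean document; each statement's English description precedes it below -/
import Mathlib

section
/- Let n ≥ 1 and 0 < λ ≤ Λ. There exist constants c₁, c₂ > 0, depending only on n, λ and Λ, such that for every normalized convex set Z ⊂ ℝⁿ and every function v : closure(Z) → ℝ which is continuous on closure(Z), convex and C² in Z, with v = 0 on ∂Z and λ ≤ det D²v(x) ≤ Λ for all x ∈ Z, one has c₁ ≤ |inf_Z v| ≤ c₂ (equivalently, c₁ ≤ −inf_Z v ≤ c₂, since v ≤ 0). -/
open MeasureTheory Metric Set
open scoped Pointwise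

noncomputable def hessMatrix {n : ℕ} (u : EuclideanSpace ℝ (Fin n) → ℝ)
    (x : EuclideanSpace ℝ (Fin n)) : Matrix (Fin n) (Fin n) ℝ :=
  fun i j => iteratedFDeriv ℝ 2 u x ![EuclideanSpace.single i (1 : ℝ), EuclideanSpace.single j 1]

noncomputable def hessNorm {n : ℕ} (u : EuclideanSpace ℝ (Fin n) → ℝ)
    (x : EuclideanSpace ℝ (Fin n)) : ℝ :=
  ‖Matrix.toEuclideanCLM (𝕜 := ℝ) (hessMatrix u x)‖

noncomputable def hessDet {n : ℕ} (u : EuclideanSpace ℝ (Fin n) → ℝ)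
    (x : EuclideanSpace ℝ (Fin n)) : ℝ :=
  (hessMatrix u x).det

def IsNormalized {n : ℕ} (Z : Set (EuclideanSpace ℝ (Fin n))) : Prop :=
  IsOpen Z ∧ Convex ℝ Z ∧ ball (0 : EuclideanSpace ℝ (Fin n)) 1 ⊆ Z ∧ Z ⊆ ball 0 n

/-!
Compare `v` with paraboloids `a (‖y‖² - r²)`. Where `v - a (‖y‖² - 1)` has an interior maximum,
`D²v ≤ 2a`; since also `D²v ≥ 0` by convexity, `det D²v ≤ (2a)ⁿ`, which is impossible once
`(2a)ⁿ < λ`. So this difference is maximal on `∂Z ⊆ {‖y‖ ≥ 1}`, where it is `≤ 0`, and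
`inf v ≤ v 0 ≤ -a`. Symmetrically, if `Λ < (2b)ⁿ` then `b (‖y‖² - n²) - v` has no interior
maximum and is `≤ 0` on `∂Z ⊆ {‖y‖ ≤ n}`, so `v ≥ -b n²`.
-/

open Filter Topology

theorem IsLocalMax.deriv_deriv_nonpos {f : ℝ → ℝ} {a : ℝ} (h : IsLocalMax f a)
    (hc : ContinuousAt f a) : deriv (deriv f) a ≤ 0 := by
  -- a positive second derivative would make `a` a local minimum too, so `f` would be locally
  -- constant and its second derivative would vanish
  by_contra! hpos
  have hmin : IsLocalMin f a := isLocalMin_of_deriv_deriv_pos hpos h.deriv_eq_zero hc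
  have hconst : f =ᶠ[𝓝 a] fun _ => f a := by
    filter_upwards [h, hmin] with x h₁ h₂ using le_antisymm h₁ h₂
  have : deriv f =ᶠ[𝓝 a] fun _ => 0 := by simpa using hconst.deriv
  simp [this.deriv_eq] at hpos

theorem ConvexOn.deriv_deriv_nonneg {f : ℝ → ℝ} {s : Set ℝ} {a : ℝ} (hf : ConvexOn ℝ s f)
    (hs : s ∈ 𝓝 a) (hd : ∀ x ∈ s, DifferentiableAt ℝ f x) : 0 ≤ deriv (deriv f) a := by
  rw [← derivWithin_of_mem_nhds hs]
  exact (hf.monotoneOn_deriv hd).derivWithin_nonneg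

section SecondDerivative

variable {E F : Type*} [NormedAddCommGroup E] [NormedSpace ℝ E]
  [NormedAddCommGroup F] [NormedSpace ℝ F] {x : E}

theorem ContDiffAt.deriv_deriv_comp_line {f : E → ℝ} (hf : ContDiffAt ℝ 2 f x) (v : E) :
    deriv (deriv fun t : ℝ => f (x + t • v)) 0 = fderiv ℝ (fderiv ℝ f) x v v := by
  have hline : ∀ t : ℝ, HasDerivAt (fun t : ℝ => x + t • v) v t := fun t => by
    simpa using ((hasDerivAt_id t).smul_const v).const_add x
  have hto : Tendsto (fun t : ℝ => x + t • v) (𝓝 0) (𝓝 x) := by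
    simpa using (hline 0).continuousAt.tendsto
  have hdiff : ∀ᶠ t in 𝓝 (0 : ℝ), DifferentiableAt ℝ f (x + t • v) :=
    hto.eventually <| (hf.eventually (by simp)).mono fun y hy => hy.differentiableAt two_ne_zero
  have hderiv : deriv (fun t : ℝ => f (x + t • v)) =ᶠ[𝓝 0] fun t => fderiv ℝ f (x + t • v) v :=
    hdiff.mono fun t ht => (ht.hasFDerivAt.comp_hasDerivAt t (hline t)).deriv
  have hf2 : HasFDerivAt (fderiv ℝ f) (fderiv ℝ (fderiv ℝ f) x) (x + (0 : ℝ) • v) := by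
    rw [zero_smul, add_zero]
    exact ((hf.fderiv_right (m := 1) le_rfl).differentiableAt one_ne_zero).hasFDerivAt
  rw [hderiv.deriv_eq]
  simpa using ((hf2.comp_hasDerivAt (f := fun t : ℝ => x + t • v) 0 (hline 0)).clm_apply
    (hasDerivAt_const 0 v)).deriv

theorem IsLocalMax.fderiv_fderiv_apply_self_nonpos {f : E → ℝ} (h : IsLocalMax f x)
    (hf : ContDiffAt ℝ 2 f x) (v : E) : fderiv ℝ (fderiv ℝ f) x v v ≤ 0 := by
  let line : ℝ → E := fun t => x + t • v
  have hline : ContinuousAt line 0 := by fun_prop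
  have hx : line 0 = x := by simp [line]
  rw [← hf.deriv_deriv_comp_line v]
  rw [← hx] at h hf
  exact (h.comp_continuous hline).deriv_deriv_nonpos (hf.continuousAt.comp hline)

theorem ConvexOn.fderiv_fderiv_apply_self_nonneg {f : E → ℝ} {s : Set E} (hs : IsOpen s)
    (hfs : ConvexOn ℝ s f) (hd : DifferentiableOn ℝ f s) (hf : ContDiffAt ℝ 2 f x) (hx : x ∈ s)
    (v : E) : 0 ≤ fderiv ℝ (fderiv ℝ f) x v v := by
  let L : ℝ →ᵃ[ℝ] E := AffineMap.lineMap x (x + v)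
  have hL : ⇑L = fun t => x + t • v :=
    funext fun t => by simp [L, AffineMap.lineMap_apply, add_comm]
  have hconv := hfs.comp_affineMap L
  rw [hL] at hconv
  rw [← hf.deriv_deriv_comp_line v]
  refine hconv.deriv_deriv_nonneg ((hs.preimage (by fun_prop)).mem_nhds (by simpa using hx))
    fun t ht => (hd.differentiableAt (hs.mem_nhds ht)).comp t (by fun_prop)

theorem ContDiffAt.fderiv_fderiv_sub {f g : E → F} (hf : ContDiffAt ℝ 2 f x)
    (hg : ContDiffAt ℝ 2 g x) :
    fderiv ℝ (fderiv ℝ fun y => f y - g y) x =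
      fderiv ℝ (fderiv ℝ f) x - fderiv ℝ (fderiv ℝ g) x := by
  have hfg : (fderiv ℝ fun y => f y - g y) =ᶠ[𝓝 x] fderiv ℝ f - fderiv ℝ g := by
    filter_upwards [hf.eventually (by simp), hg.eventually (by simp)] with y hfy hgy
    exact fderiv_fun_sub (hfy.differentiableAt two_ne_zero) (hgy.differentiableAt two_ne_zero)
  rw [hfg.fderiv_eq]
  exact fderiv_sub ((hf.fderiv_right (m := 1) le_rfl).differentiableAt one_ne_zero)
    ((hg.fderiv_right (m := 1) le_rfl).differentiableAt one_ne_zero)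

end SecondDerivative

section Paraboloid

variable {E : Type*} [NormedAddCommGroup E] [InnerProductSpace ℝ E] {v : E → ℝ} {x : E}
  {a c : ℝ}

theorem contDiff_paraboloid : ContDiff ℝ 2 fun y : E => a * (‖y‖ ^ 2 - c) :=
  contDiff_const.mul ((contDiff_norm_sq ℝ).sub contDiff_const)

theorem fderiv_fderiv_paraboloid (u : E) :
    fderiv ℝ (fderiv ℝ fun y : E => a * (‖y‖ ^ 2 - c)) x u u = 2 * a * ‖u‖ ^ 2 := by
  have h : (fderiv ℝ fun y : E => a * (‖y‖ ^ 2 - c)) = fun y => (a • 2 • innerSL ℝ) y := by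
    funext y
    exact (((hasStrictFDerivAt_norm_sq y).hasFDerivAt.sub_const c).const_mul a).fderiv
  rw [h, ContinuousLinearMap.fderiv]
  simp only [smul_apply, smul_eq_mul, nsmul_eq_mul]
  rw [innerSL_apply_apply, real_inner_self_eq_norm_sq]
  ring

theorem IsLocalMax.fderiv_fderiv_le_of_sub_paraboloid
    (h : IsLocalMax (fun y => v y - a * (‖y‖ ^ 2 - c)) x) (hv : ContDiffAt ℝ 2 v x) (u : E) :
    fderiv ℝ (fderiv ℝ v) x u u ≤ 2 * a * ‖u‖ ^ 2 := by
  have hq := (contDiff_paraboloid (a := a) (c := c)).contDiffAt (x := x)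
  have := h.fderiv_fderiv_apply_self_nonpos (hv.sub hq) u
  rw [hv.fderiv_fderiv_sub hq] at this
  simp only [sub_apply, fderiv_fderiv_paraboloid] at this
  linarith

theorem IsLocalMax.le_fderiv_fderiv_of_paraboloid_sub
    (h : IsLocalMax (fun y => a * (‖y‖ ^ 2 - c) - v y) x) (hv : ContDiffAt ℝ 2 v x) (u : E) :
    2 * a * ‖u‖ ^ 2 ≤ fderiv ℝ (fderiv ℝ v) x u u := by
  have hq := (contDiff_paraboloid (a := a) (c := c)).contDiffAt (x := x)
  have := h.fderiv_fderiv_apply_self_nonpos (hq.sub hv) u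
  rw [hq.fderiv_fderiv_sub hv] at this
  simp only [sub_apply, fderiv_fderiv_paraboloid] at this
  linarith

end Paraboloid

namespace Matrix.IsHermitian

variable {ι : Type*} [Fintype ι] [DecidableEq ι] {M : Matrix ι ι ℝ}

theorem eigenvalues_eq_dotProduct_mulVec (hM : M.IsHermitian) (i : ι) :
    hM.eigenvalues i = ⇑(hM.eigenvectorBasis i) ⬝ᵥ M *ᵥ ⇑(hM.eigenvectorBasis i) := by
  simpa using hM.eigenvalues_eq i

theorem det_le_pow (hM : M.IsHermitian) {c : ℝ}
    (h0 : ∀ u : EuclideanSpace ℝ ι, 0 ≤ ⇑u ⬝ᵥ M *ᵥ ⇑u)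
    (hc : ∀ u : EuclideanSpace ℝ ι, ⇑u ⬝ᵥ M *ᵥ ⇑u ≤ c * ‖u‖ ^ 2) :
    M.det ≤ c ^ Fintype.card ι := by
  have hunit (i : ι) : ‖hM.eigenvectorBasis i‖ = 1 := hM.eigenvectorBasis.orthonormal.1 i
  rw [hM.det_eq_prod_eigenvalues, ← Finset.card_univ, ← Finset.prod_const]
  refine Finset.prod_le_prod (fun i _ => ?_) (fun i _ => ?_) <;>
    rw [hM.eigenvalues_eq_dotProduct_mulVec]
  · exact h0 _
  · simpa [hunit] using hc (hM.eigenvectorBasis i)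

theorem pow_le_det (hM : M.IsHermitian) {c : ℝ} (hc0 : 0 ≤ c)
    (hc : ∀ u : EuclideanSpace ℝ ι, c * ‖u‖ ^ 2 ≤ ⇑u ⬝ᵥ M *ᵥ ⇑u) :
    c ^ Fintype.card ι ≤ M.det := by
  have hunit (i : ι) : ‖hM.eigenvectorBasis i‖ = 1 := hM.eigenvectorBasis.orthonormal.1 i
  rw [hM.det_eq_prod_eigenvalues, ← Finset.card_univ, ← Finset.prod_const]
  refine Finset.prod_le_prod (fun i _ => hc0) (fun i _ => ?_)
  rw [hM.eigenvalues_eq_dotProduct_mulVec]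
  simpa [hunit] using hc (hM.eigenvectorBasis i)

end Matrix.IsHermitian

section Hessian

open Matrix

variable {n : ℕ} {f : EuclideanSpace ℝ (Fin n) → ℝ} {x : EuclideanSpace ℝ (Fin n)}

theorem hessMatrix_eq_toMatrix :
    hessMatrix f x = (fderiv ℝ (fderiv ℝ f) x).toBilinForm.toMatrix
      (EuclideanSpace.basisFun (Fin n) ℝ).toBasis := by
  ext i j
  rw [LinearMap.BilinForm.toMatrix_apply]
  simp [hessMatrix, iteratedFDeriv_two_apply]

theorem dotProduct_hessMatrix_mulVec (u : EuclideanSpace ℝ (Fin n)) :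
    ⇑u ⬝ᵥ hessMatrix f x *ᵥ ⇑u = fderiv ℝ (fderiv ℝ f) x u u := by
  have hrepr : ⇑((EuclideanSpace.basisFun (Fin n) ℝ).toBasis.repr u) = ⇑u := by
    ext i
    simp
  rw [hessMatrix_eq_toMatrix, ← hrepr]
  exact ((fderiv ℝ (fderiv ℝ f) x).toBilinForm.apply_eq_dotProduct_toMatrix_mulVec _ u u).symm

theorem ContDiffAt.isHermitian_hessMatrix (hf : ContDiffAt ℝ 2 f x) :
    (hessMatrix f x).IsHermitian := by
  ext i j
  simp only [conjTranspose_apply, star_trivial, hessMatrix_eq_toMatrix,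
    LinearMap.BilinForm.toMatrix_apply]
  exact hf.isSymmSndFDerivAt (by simp) _ _

theorem hessDet_le_pow (hf : ContDiffAt ℝ 2 f x) {c : ℝ}
    (h0 : ∀ u, 0 ≤ fderiv ℝ (fderiv ℝ f) x u u)
    (hc : ∀ u, fderiv ℝ (fderiv ℝ f) x u u ≤ c * ‖u‖ ^ 2) : hessDet f x ≤ c ^ n := by
  simpa [hessDet] using
    hf.isHermitian_hessMatrix.det_le_pow (by simpa [dotProduct_hessMatrix_mulVec])
    (by simpa [dotProduct_hessMatrix_mulVec])

theorem pow_le_hessDet (hf : ContDiffAt ℝ 2 f x) {c : ℝ} (hc0 : 0 ≤ c)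
    (hc : ∀ u, c * ‖u‖ ^ 2 ≤ fderiv ℝ (fderiv ℝ f) x u u) : c ^ n ≤ hessDet f x := by
  simpa [hessDet] using
    hf.isHermitian_hessMatrix.pow_le_det hc0 (by simpa [dotProduct_hessMatrix_mulVec])

end Hessian

theorem le_of_frontier_le_of_forall_not_isLocalMax {X : Type*} [TopologicalSpace X] {Z : Set X}
    (hZ : IsOpen Z) (hcpt : IsCompact (closure Z)) {F : X → ℝ} (hF : ContinuousOn F (closure Z))
    (hmax : ∀ x ∈ Z, ¬IsLocalMax F x) {c : ℝ} (hbd : ∀ x ∈ frontier Z, F x ≤ c) {y : X}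
    (hy : y ∈ closure Z) : F y ≤ c := by
  obtain ⟨x₀, hx₀, hmax₀⟩ := hcpt.exists_isMaxOn ⟨y, hy⟩ hF
  have hx₀Z : x₀ ∉ Z := fun hx =>
    hmax x₀ hx (hmax₀.isLocalMax (mem_of_superset (hZ.mem_nhds hx) subset_closure))
  exact (hmax₀ hy).trans (hbd x₀ (hZ.frontier_eq ▸ ⟨hx₀, hx₀Z⟩))

section Comparison

variable {n : ℕ} {Z : Set (EuclideanSpace ℝ (Fin n))} {v : EuclideanSpace ℝ (Fin n) → ℝ}
  {r a : ℝ}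

theorem le_paraboloid_of_pow_lt_hessDet (hZ : IsOpen Z) (hZb : Bornology.IsBounded Z)
    (hr : 0 ≤ r) (hball : ball 0 r ⊆ Z) (hcont : ContinuousOn v (closure Z))
    (hconv : ConvexOn ℝ Z v) (hsm : ContDiffOn ℝ 2 v Z) (hbd : ∀ x ∈ frontier Z, v x ≤ 0)
    (ha : 0 ≤ a) (hdet : ∀ x ∈ Z, (2 * a) ^ n < hessDet v x) {y : EuclideanSpace ℝ (Fin n)}
    (hy : y ∈ closure Z) : v y ≤ a * (‖y‖ ^ 2 - r ^ 2) := by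
  have hq : Continuous fun y : EuclideanSpace ℝ (Fin n) => a * (‖y‖ ^ 2 - r ^ 2) := by fun_prop
  suffices v y - a * (‖y‖ ^ 2 - r ^ 2) ≤ 0 by linarith
  refine le_of_frontier_le_of_forall_not_isLocalMax (F := fun y => v y - a * (‖y‖ ^ 2 - r ^ 2))
    hZ hZb.isCompact_closure (hcont.sub hq.continuousOn) (fun x hx hmax => ?_) (fun x hx => ?_) hy
  · have hvx : ContDiffAt ℝ 2 v x := hsm.contDiffAt (hZ.mem_nhds hx)
    have hpsd (u) : 0 ≤ fderiv ℝ (fderiv ℝ v) x u u :=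
      hconv.fderiv_fderiv_apply_self_nonneg hZ (hsm.differentiableOn two_ne_zero) hvx hx u
    exact (hdet x hx).not_ge
      (hessDet_le_pow hvx hpsd (hmax.fderiv_fderiv_le_of_sub_paraboloid hvx))
  · have hxZ : x ∉ Z := fun h => (hZ.frontier_eq ▸ hx).2 h
    have hrx : r ≤ ‖x‖ := not_lt.1 fun h => hxZ (hball (mem_ball_zero_iff.2 h))
    have := hbd x hx
    nlinarith [mul_nonneg ha (sub_nonneg.2 (pow_le_pow_left₀ hr hrx 2))]

theorem paraboloid_le_of_hessDet_lt_pow (hZ : IsOpen Z) (hZb : Bornology.IsBounded Z)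
    (hball : Z ⊆ ball 0 r) (hcont : ContinuousOn v (closure Z)) (hsm : ContDiffOn ℝ 2 v Z)
    (hbd : ∀ x ∈ frontier Z, 0 ≤ v x) (ha : 0 ≤ a) (hdet : ∀ x ∈ Z, hessDet v x < (2 * a) ^ n)
    {y : EuclideanSpace ℝ (Fin n)} (hy : y ∈ closure Z) : a * (‖y‖ ^ 2 - r ^ 2) ≤ v y := by
  have hq : Continuous fun y : EuclideanSpace ℝ (Fin n) => a * (‖y‖ ^ 2 - r ^ 2) := by fun_prop
  suffices a * (‖y‖ ^ 2 - r ^ 2) - v y ≤ 0 by linarith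
  refine le_of_frontier_le_of_forall_not_isLocalMax (F := fun y => a * (‖y‖ ^ 2 - r ^ 2) - v y)
    hZ hZb.isCompact_closure (hq.continuousOn.sub hcont) (fun x hx hmax => ?_) (fun x hx => ?_) hy
  · have hvx : ContDiffAt ℝ 2 v x := hsm.contDiffAt (hZ.mem_nhds hx)
    exact (hdet x hx).not_ge
      (pow_le_hessDet hvx (by positivity) (hmax.le_fderiv_fderiv_of_paraboloid_sub hvx))
  · have hxr : ‖x‖ ≤ r := by
      simpa using closure_ball_subset_closedBall (closure_mono hball (frontier_subset_closure hx))
    have := hbd x hx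
    nlinarith [mul_nonneg ha (sub_nonneg.2 (pow_le_pow_left₀ (norm_nonneg x) hxr 2))]

end Comparison

theorem exists_two_mul_pow_lt {n : ℕ} (hn : n ≠ 0) {c : ℝ} (hc : 0 < c) :
    ∃ a > 0, (2 * a) ^ n < c := by
  refine ⟨min c 1 / 4, by positivity, ?_⟩
  calc (2 * (min c 1 / 4)) ^ n ≤ 2 * (min c 1 / 4) :=
        pow_le_of_le_one (by positivity) (by linarith [min_le_right c 1]) hn
    _ < c := by linarith [min_le_left c 1, lt_min hc one_pos]

theorem exists_lt_two_mul_pow {n : ℕ} (hn : n ≠ 0) (c : ℝ) : ∃ b > 0, c < (2 * b) ^ n := by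
  refine ⟨max c 1, by positivity, ?_⟩
  calc c < 2 * max c 1 := by linarith [le_max_left c 1, le_max_right c 1]
    _ ≤ (2 * max c 1) ^ n := le_self_pow₀ (by linarith [le_max_right c 1]) hn

theorem alexandrov_inf_bounds_general (n : ℕ) (hn : 1 ≤ n) (lam Lam : ℝ)
    (hlam : 0 < lam) :
    ∃ c₁ > 0, ∃ c₂ > 0,
      ∀ (Z : Set (EuclideanSpace ℝ (Fin n))) (v : EuclideanSpace ℝ (Fin n) → ℝ),
      IsNormalized Z →
      ContinuousOn v (closure Z) → ConvexOn ℝ Z v → ContDiffOn ℝ 2 v Z →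
      (∀ x ∈ frontier Z, v x = 0) →
      (∀ x ∈ Z, lam ≤ hessDet v x ∧ hessDet v x ≤ Lam) →
      c₁ ≤ |sInf (v '' Z)| ∧ |sInf (v '' Z)| ≤ c₂ := by
  obtain ⟨a, ha, hlam'⟩ := exists_two_mul_pow_lt (n := n) (by omega) hlam
  obtain ⟨b, hb, hLam'⟩ := exists_lt_two_mul_pow (n := n) (by omega) Lam
  have hn' : (0 : ℝ) < n := by exact_mod_cast hn
  refine ⟨a, ha, b * n ^ 2, by positivity, fun Z v hZ hcont hconv hsm hbd hdet => ?_⟩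
  obtain ⟨hZo, -, hball, hsub⟩ := hZ
  have hZb : Bornology.IsBounded Z := isBounded_ball.subset hsub
  have h0 : (0 : EuclideanSpace ℝ (Fin n)) ∈ Z := hball (mem_ball_self one_pos)
  have hv0 : v 0 ≤ -a := by
    simpa using le_paraboloid_of_pow_lt_hessDet hZo hZb zero_le_one hball hcont hconv hsm
      (fun x hx => (hbd x hx).le) ha.le (fun x hx => hlam'.trans_le (hdet x hx).1)
      (subset_closure h0)
  have hlower : ∀ y ∈ Z, -(b * n ^ 2) ≤ v y := fun y hy => by
    have := paraboloid_le_of_hessDet_lt_pow hZo hZb hsub hcont hsm (fun x hx => (hbd x hx).ge)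
      hb.le (fun x hx => (hdet x hx).2.trans_lt hLam') (subset_closure hy)
    nlinarith [sq_nonneg ‖y‖]
  have hinf_le : sInf (v '' Z) ≤ -a :=
    (csInf_le ⟨_, forall_mem_image.2 hlower⟩ (mem_image_of_mem v h0)).trans hv0
  have hle_inf : -(b * n ^ 2) ≤ sInf (v '' Z) :=
    le_csInf (image_nonempty.2 ⟨0, h0⟩) (forall_mem_image.2 hlower)
  rw [abs_of_neg (by linarith)]
  constructor <;> linarith

theorem alexandrov_inf_bounds (n : ℕ) (hn : 1 ≤ n) (lam Lam : ℝ)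
    (hlam : 0 < lam) (hlL : lam ≤ Lam) :
    ∃ c₁ > 0, ∃ c₂ > 0,
      ∀ (Z : Set (EuclideanSpace ℝ (Fin n))) (v : EuclideanSpace ℝ (Fin n) → ℝ),
      IsNormalized Z →
      ContinuousOn v (closure Z) → ConvexOn ℝ Z v → ContDiffOn ℝ 2 v Z →
      (∀ x ∈ frontier Z, v x = 0) →
      (∀ x ∈ Z, lam ≤ hessDet v x ∧ hessDet v x ≤ Lam) →
      c₁ ≤ |sInf (v '' Z)| ∧ |sInf (v '' Z)| ≤ c₂ :=
  alexandrov_inf_bounds_general n hn lam Lam hlam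
end

section
/- Let n ≥ 1 and 0 < λ ≤ Λ. There exist constants c', c'' > 0, depending only on n, λ and Λ, such that for every normalized convex set Z ⊂ ℝⁿ and every function v : closure(Z) → ℝ which is continuous on closure(Z), convex and C² in Z, with v = 0 on ∂Z and λ ≤ det D²v(x) ≤ Λ for all x ∈ Z, there exists a Borel set E ⊆ Z with |E| ≥ c' |Z| and D²v(x) ≥ c'' Id for every x ∈ E (i.e. ⟨D²v(x) ξ, ξ⟩ ≥ c'' |ξ|² for all ξ ∈ ℝⁿ and all x ∈ E). -/
open MeasureTheory Metric Set
open scoped Pointwise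

open Filter
open scoped Topology ENNReal RealInnerProductSpace

/-!
Comparing `v` with a paraboloid `c (‖x‖² - n²)` with `(2c)ⁿ > Λ`: at an interior minimum of the
difference `D²v ≥ 2c`, so `det D²v ≥ (2c)ⁿ`, which is impossible; with the maximum principle for
the convex `v` this gives `-c n² ≤ v ≤ 0` on `Z`. Along a segment of length `1/4` through a point
of `B(0, 1/4)`, convexity and this bound limit the total increase of a directional derivative, so
the corresponding second derivative exceeds `M` only on a short subset of the segment. Averaging
over translates of `B(0, 1/8)` turns this into a measure bound, and for `M` large every diagonal
entry of `D²v` is at most `M` on half of `B(0, 1/8)`. There the eigenvalues of `D²v` lie in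
`[0, nM]`, and `det D²v ≥ λ` bounds each of them below by `λ / (nM)ⁿ⁻¹`.
-/

namespace Matrix.IsHermitian

variable {ι : Type*} [Fintype ι] [DecidableEq ι] {A : Matrix ι ι ℝ} (hA : A.IsHermitian)
include hA

lemma toEuclideanCLM_eigenvectorBasis (k : ι) :
    toEuclideanCLM (𝕜 := ℝ) A (hA.eigenvectorBasis k) =
      hA.eigenvalues k • hA.eigenvectorBasis k := by
  apply WithLp.ofLp_injective
  simpa using hA.mulVec_eigenvectorBasis k

lemma inner_toEuclideanCLM_self (ξ : EuclideanSpace ℝ ι) :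
    ⟪toEuclideanCLM (𝕜 := ℝ) A ξ, ξ⟫ =
      ∑ k, hA.eigenvalues k * ⟪hA.eigenvectorBasis k, ξ⟫ ^ 2 := by
  nth_rw 1 [← hA.eigenvectorBasis.sum_repr' ξ]
  simp only [map_sum, map_smul, hA.toEuclideanCLM_eigenvectorBasis, smul_smul, sum_inner,
    real_inner_smul_left]
  exact Finset.sum_congr rfl fun k _ => by ring

lemma le_eigenvalues_of_forall_le_inner {β : ℝ}
    (h : ∀ ξ, β * ‖ξ‖ ^ 2 ≤ ⟪toEuclideanCLM (𝕜 := ℝ) A ξ, ξ⟫) (k : ι) :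
    β ≤ hA.eigenvalues k := by
  simpa [hA.toEuclideanCLM_eigenvectorBasis, real_inner_smul_left,
    hA.eigenvectorBasis.orthonormal.1 k] using h (hA.eigenvectorBasis k)

lemma le_inner_of_forall_le_eigenvalues {β : ℝ} (h : ∀ k, β ≤ hA.eigenvalues k)
    (ξ : EuclideanSpace ℝ ι) : β * ‖ξ‖ ^ 2 ≤ ⟪toEuclideanCLM (𝕜 := ℝ) A ξ, ξ⟫ := by
  rw [hA.inner_toEuclideanCLM_self, ← hA.eigenvectorBasis.sum_sq_inner_right, Finset.mul_sum]
  gcongr with k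
  exact h k

lemma pow_card_le_det {β : ℝ} (hβ : 0 ≤ β)
    (h : ∀ ξ, β * ‖ξ‖ ^ 2 ≤ ⟪toEuclideanCLM (𝕜 := ℝ) A ξ, ξ⟫) :
    β ^ Fintype.card ι ≤ A.det := by
  rw [hA.det_eq_prod_eigenvalues, ← Finset.card_univ, ← Finset.prod_const]
  exact Finset.prod_le_prod (fun _ _ => hβ) fun k _ => hA.le_eigenvalues_of_forall_le_inner h k

lemma div_pow_mul_le_inner_of_trace_le {T d : ℝ} (hT : 0 < T)
    (hpsd : ∀ ξ, 0 ≤ ⟪toEuclideanCLM (𝕜 := ℝ) A ξ, ξ⟫) (htr : A.trace ≤ T)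
    (hdet : d ≤ A.det) (ξ : EuclideanSpace ℝ ι) :
    d / T ^ (Fintype.card ι - 1) * ‖ξ‖ ^ 2 ≤ ⟪toEuclideanCLM (𝕜 := ℝ) A ξ, ξ⟫ := by
  have hnonneg k : 0 ≤ hA.eigenvalues k :=
    hA.le_eigenvalues_of_forall_le_inner (by simpa using hpsd) k
  have hle k : hA.eigenvalues k ≤ T := by
    refine (Finset.single_le_sum (fun i _ => hnonneg i) (Finset.mem_univ k)).trans ?_
    simpa [hA.trace_eq_sum_eigenvalues] using htr
  refine hA.le_inner_of_forall_le_eigenvalues (fun k => ?_) ξ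
  rw [div_le_iff₀ (by positivity)]
  calc d ≤ ∏ i, hA.eigenvalues i := by simpa [hA.det_eq_prod_eigenvalues] using hdet
    _ = hA.eigenvalues k * ∏ i ∈ Finset.univ.erase k, hA.eigenvalues i :=
      (Finset.mul_prod_erase _ _ (Finset.mem_univ k)).symm
    _ ≤ hA.eigenvalues k * ∏ _i ∈ Finset.univ.erase k, T := by
      gcongr with i
      exacts [hnonneg k, fun i _ => hnonneg i, hle i]
    _ = hA.eigenvalues k * T ^ (Fintype.card ι - 1) := by simp [Finset.card_erase_of_mem]

end Matrix.IsHermitian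

section RealLine

variable {g g' g'' : ℝ → ℝ} {t c : ℝ}

lemma IsLocalMin.nonneg_of_hasDerivAt_hasDerivAt (hmin : IsLocalMin g t)
    (hg : ∀ᶠ s in 𝓝 t, HasDerivAt g (g' s) s) (hg' : HasDerivAt g' c t) : 0 ≤ c := by
  have hc : deriv (deriv g) t = c :=
    (Filter.EventuallyEq.deriv_eq (hg.mono fun s hs => hs.deriv)).trans hg'.deriv
  by_contra! hneg
  have hmax : IsLocalMax g t :=
    isLocalMax_of_deriv_deriv_neg (hc ▸ hneg) hmin.deriv_eq_zero hg.self_of_nhds.continuousAt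
  have hconst : g =ᶠ[𝓝 t] fun _ => g t :=
    (hmin.and hmax).mono fun s hs => le_antisymm hs.2 hs.1
  have hderiv : deriv g =ᶠ[𝓝 t] fun _ => 0 :=
    hconst.eventuallyEq_nhds.mono fun s hs => by rw [hs.deriv_eq, deriv_const]
  rw [hderiv.deriv_eq, deriv_const] at hc
  exact hneg.ne hc.symm

lemma ConvexOn.nonneg_of_hasDerivAt_hasDerivAt {S : Set ℝ} (hconv : ConvexOn ℝ S g)
    (hS : S ∈ 𝓝 t) (hg : ∀ s ∈ S, HasDerivAt g (g' s) s) (hg' : HasDerivAt g' c t) :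
    0 ≤ c := by
  have hmono : MonotoneOn g' S := fun x hx y hy hxy => by
    simpa only [(hg x hx).deriv, (hg y hy).deriv] using
      hconv.monotoneOn_deriv (fun s hs => (hg s hs).differentiableAt) hx hy hxy
  rw [← hg'.deriv, ← derivWithin_of_mem_nhds hS]
  exact hmono.derivWithin_nonneg

lemma ConvexOn.sub_le_of_hasDerivAt_of_abs_le {a b h C : ℝ}
    (hconv : ConvexOn ℝ (Icc (a - h) (b + h)) g) (hab : a ≤ b) (hh : 0 < h)
    (hC : ∀ s ∈ Icc (a - h) (b + h), |g s| ≤ C) (ha : HasDerivAt g (g' a) a)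
    (hb : HasDerivAt g (g' b) b) :
    g' b - g' a ≤ 4 * C / h := by
  have hbound : ∀ s ∈ Icc (a - h) (b + h), -C ≤ g s ∧ g s ≤ C := fun s hs => abs_le.1 (hC s hs)
  have hb' := hconv.le_slope_of_hasDerivAt (x := b) (y := b + h) ⟨by linarith, by linarith⟩
    ⟨by linarith, le_rfl⟩ (by linarith) hb
  have ha' := hconv.slope_le_of_hasDerivAt (x := a - h) (y := a) ⟨le_rfl, by linarith⟩
    ⟨by linarith, by linarith⟩ (by linarith) ha
  rw [slope_def_field, show b + h - b = h by ring, le_div_iff₀' hh] at hb'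
  rw [slope_def_field, show a - (a - h) = h by ring, div_le_iff₀' hh] at ha'
  have h₁ := hbound b ⟨by linarith, by linarith⟩
  have h₂ := hbound (b + h) ⟨by linarith, le_rfl⟩
  have h₃ := hbound a ⟨by linarith, by linarith⟩
  have h₄ := hbound (a - h) ⟨le_rfl, by linarith⟩
  rw [le_div_iff₀' hh]
  nlinarith

lemma volume_setOf_lt_le_of_hasDerivAt {a b M : ℝ} (hab : a ≤ b) (hM : 0 < M)
    (hg' : ∀ s ∈ Icc a b, HasDerivAt g' (g'' s) s) (hcont : ContinuousOn g'' (Icc a b))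
    (hnonneg : ∀ s ∈ Icc a b, 0 ≤ g'' s) :
    volume {s ∈ Ioo a b | M < g'' s} ≤ ENNReal.ofReal ((g' b - g' a) / M) := by
  have hftc : ∫ s in Ioo a b, g'' s = g' b - g' a := by
    rw [← integral_Ioc_eq_integral_Ioo, ← intervalIntegral.integral_of_le hab]
    refine intervalIntegral.integral_eq_sub_of_hasDerivAt (fun s hs => hg' s ?_)
      (hcont.intervalIntegrable_of_Icc hab)
    rwa [uIcc_of_le hab] at hs
  have hcheb := mul_meas_ge_le_integral_of_nonneg
    (ae_restrict_of_forall_mem measurableSet_Ioo fun s hs => hnonneg s (Ioo_subset_Icc_self hs))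
    ((hcont.integrableOn_Icc (μ := volume)).mono_set Ioo_subset_Icc_self) M
  rw [hftc, ← le_div_iff₀' hM, measureReal_def,
    Measure.restrict_apply' measurableSet_Ioo] at hcheb
  calc volume {s ∈ Ioo a b | M < g'' s}
      ≤ volume ({s | M ≤ g'' s} ∩ Ioo a b) := measure_mono fun s hs => ⟨hs.2.le, hs.1⟩
    _ = ENNReal.ofReal (volume ({s | M ≤ g'' s} ∩ Ioo a b)).toReal :=
      (ENNReal.ofReal_toReal
        (measure_ne_top_of_subset inter_subset_right measure_Ioo_lt_top.ne)).symm
    _ ≤ ENNReal.ofReal ((g' b - g' a) / M) := ENNReal.ofReal_le_ofReal hcheb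

end RealLine

section Lines

variable {E : Type*} [NormedAddCommGroup E] [NormedSpace ℝ E] {Z : Set E} {v : E → ℝ} {x ξ : E}
  {t : ℝ}

lemma hasDerivAt_add_smul (x ξ : E) (t : ℝ) : HasDerivAt (fun s : ℝ => x + s • ξ) ξ t := by
  simpa using ((hasDerivAt_id t).smul_const ξ).const_add x

lemma ConvexOn.comp_add_smul (hconv : ConvexOn ℝ Z v) (x ξ : E) :
    ConvexOn ℝ {s : ℝ | x + s • ξ ∈ Z} fun s => v (x + s • ξ) := by
  have hline : ⇑(AffineMap.lineMap (k := ℝ) x (x + ξ)) = fun s : ℝ => x + s • ξ := by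
    ext s
    simp [AffineMap.lineMap_apply, add_comm]
  have h := hconv.comp_affineMap (AffineMap.lineMap x (x + ξ))
  rwa [hline] at h

variable (hZ : IsOpen Z) (hv : ContDiffOn ℝ 2 v Z)
include hZ hv

lemma ContDiffOn.hasDerivAt_comp_add_smul (h : x + t • ξ ∈ Z) :
    HasDerivAt (fun s => v (x + s • ξ)) (fderiv ℝ v (x + t • ξ) ξ) t :=
  ((hv.differentiableOn (by norm_num) _ h).differentiableAt
    (hZ.mem_nhds h)).hasFDerivAt.comp_hasDerivAt t (hasDerivAt_add_smul x ξ t)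

lemma ContDiffOn.hasDerivAt_fderiv_comp_add_smul (h : x + t • ξ ∈ Z) :
    HasDerivAt (fun s => fderiv ℝ v (x + s • ξ) ξ)
      (fderiv ℝ (fderiv ℝ v) (x + t • ξ) ξ ξ) t := by
  have hv' : ContDiffOn ℝ 1 (fderiv ℝ v) Z := hv.fderiv_of_isOpen hZ (by norm_num)
  have hd : DifferentiableAt ℝ (fderiv ℝ v) (x + t • ξ) :=
    (hv'.differentiableOn one_ne_zero _ h).differentiableAt (hZ.mem_nhds h)
  have hline := hd.hasFDerivAt.comp_hasDerivAt t (hasDerivAt_add_smul x ξ t)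
  simpa using hline.clm_apply (hasDerivAt_const t ξ)

lemma ContDiffOn.continuousOn_fderiv_fderiv : ContinuousOn (fderiv ℝ (fderiv ℝ v)) Z :=
  (hv.fderiv_of_isOpen hZ (m := 1) (by norm_num)).continuousOn_fderiv_of_isOpen hZ le_rfl

lemma ConvexOn.fderiv_fderiv_self_nonneg (hconv : ConvexOn ℝ Z v) (hx : x ∈ Z) (ξ : E) :
    0 ≤ fderiv ℝ (fderiv ℝ v) x ξ ξ := by
  have hx' : x + (0 : ℝ) • ξ ∈ Z := by simpa using hx
  have hS : IsOpen {s : ℝ | x + s • ξ ∈ Z} := hZ.preimage (by fun_prop)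
  simpa using (hconv.comp_add_smul x ξ).nonneg_of_hasDerivAt_hasDerivAt (hS.mem_nhds hx')
    (fun s hs => hv.hasDerivAt_comp_add_smul hZ hs) (hv.hasDerivAt_fderiv_comp_add_smul hZ hx')

end Lines

section Paraboloid

variable {E : Type*} [NormedAddCommGroup E] [InnerProductSpace ℝ E] [ProperSpace E]
  {Z : Set E} {v : E → ℝ} {R c : ℝ}

lemma exists_forall_le_fderiv_fderiv_of_lt_paraboloid (hZ : IsOpen Z) (hZR : Z ⊆ ball 0 R)
    (hcont : ContinuousOn v (closure Z)) (hv : ContDiffOn ℝ 2 v Z)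
    (hfr : ∀ x ∈ frontier Z, v x = 0) (hc : 0 ≤ c) {z : E} (hz : z ∈ Z)
    (hlt : v z < c * (‖z‖ ^ 2 - R ^ 2)) :
    ∃ x₀ ∈ Z, ∀ ξ, 2 * c * ‖ξ‖ ^ 2 ≤ fderiv ℝ (fderiv ℝ v) x₀ ξ ξ := by
  set F : E → ℝ := fun x => v x - c * (‖x‖ ^ 2 - R ^ 2)
  have hFfr : ∀ y ∈ closure Z \ Z, F z < F y := by
    intro y hy
    have hyR : ‖y‖ ≤ R := by
      simpa using (closure_mono hZR).trans closure_ball_subset_closedBall hy.1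
    have hy0 : v y = 0 := hfr y ⟨hy.1, by rw [hZ.interior_eq]; exact hy.2⟩
    have : 0 ≤ c * (R ^ 2 - ‖y‖ ^ 2) := mul_nonneg hc (by nlinarith [norm_nonneg y])
    simp only [F, hy0]
    linarith
  have hFcont : ContinuousOn F (closure Z) :=
    hcont.sub (Continuous.continuousOn (f := fun x : E => c * (‖x‖ ^ 2 - R ^ 2)) (by fun_prop))
  obtain ⟨x₀, hx₀, hmin⟩ := (isBounded_ball.subset hZR).isCompact_closure.exists_isLocalMin_mem_open
    subset_closure hFcont (subset_closure hz) hFfr hZ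
  refine ⟨x₀, hx₀, fun ξ => ?_⟩
  have hx₀' : x₀ + (0 : ℝ) • ξ ∈ Z := by simpa using hx₀
  have hline : IsLocalMin (fun s : ℝ => F (x₀ + s • ξ)) 0 :=
    IsLocalMin.comp_continuous (f := F) (g := fun s : ℝ => x₀ + s • ξ)
      (by simp only [zero_smul, add_zero]; exact hmin) (hasDerivAt_add_smul x₀ ξ 0).continuousAt
  have hnear : ∀ᶠ s in 𝓝 (0 : ℝ), x₀ + s • ξ ∈ Z :=
    (hasDerivAt_add_smul x₀ ξ 0).continuousAt.preimage_mem_nhds (hZ.mem_nhds hx₀')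
  have key := hline.nonneg_of_hasDerivAt_hasDerivAt
    (g' := fun s => fderiv ℝ v (x₀ + s • ξ) ξ - c * (2 * ⟪x₀ + s • ξ, ξ⟫))
    (hnear.mono fun s hs => (hv.hasDerivAt_comp_add_smul hZ hs).sub
      (((hasDerivAt_add_smul x₀ ξ s).norm_sq.sub_const (R ^ 2)).const_mul c))
    ((hv.hasDerivAt_fderiv_comp_add_smul hZ hx₀').sub
      ((((hasDerivAt_add_smul x₀ ξ 0).inner ℝ (hasDerivAt_const 0 ξ)).const_mul 2).const_mul c))
  simp only [zero_smul, add_zero, inner_zero_right, zero_add, real_inner_self_eq_norm_sq] at key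
  linarith

/-- The maximum principle: `-v` cannot dip below the paraboloid `ε (‖x‖² - R²)`, since at the
contact point `D²(-v) ≥ 2ε > 0` would contradict the convexity of `v`. -/
lemma ConvexOn.nonpos_of_eq_zero_on_frontier [Nontrivial E] (hZ : IsOpen Z)
    (hZR : Z ⊆ ball 0 R) (hconv : ConvexOn ℝ Z v) (hcont : ContinuousOn v (closure Z))
    (hv : ContDiffOn ℝ 2 v Z) (hfr : ∀ x ∈ frontier Z, v x = 0) {z : E} (hz : z ∈ Z) :
    v z ≤ 0 := by
  have key : ∀ ε > 0, v z ≤ ε * R ^ 2 := by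
    intro ε hε
    by_contra! hlt
    obtain ⟨x₀, hx₀, hge⟩ := exists_forall_le_fderiv_fderiv_of_lt_paraboloid hZ hZR hcont.neg
      hv.neg (by simpa using hfr) hε.le hz (by simp only [Pi.neg_apply]; nlinarith [norm_nonneg z])
    obtain ⟨ξ, hξ⟩ := exists_ne (0 : E)
    have hneg : fderiv ℝ (fderiv ℝ (-v)) x₀ = -fderiv ℝ (fderiv ℝ v) x₀ := by
      have h₁ : fderiv ℝ (-v) = -fderiv ℝ v := funext fun y => fderiv_neg
      have h₂ : fderiv ℝ (-fderiv ℝ v) = -fderiv ℝ (fderiv ℝ v) := funext fun y => fderiv_neg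
      rw [h₁, h₂]
      rfl
    have h₁ : 2 * ε * ‖ξ‖ ^ 2 ≤ -fderiv ℝ (fderiv ℝ v) x₀ ξ ξ := by simpa [hneg] using hge ξ
    have h₂ := hconv.fderiv_fderiv_self_nonneg hZ hv hx₀ ξ
    have h₃ : 0 < 2 * ε * ‖ξ‖ ^ 2 := by positivity
    linarith
  have hlim : Tendsto (fun ε : ℝ => ε * R ^ 2) (𝓝[>] 0) (𝓝 0) := by
    simpa using ((continuous_mul_const (R ^ 2)).tendsto 0).mono_left nhdsWithin_le_nhds
  exact ge_of_tendsto hlim (eventually_nhdsWithin_of_forall fun ε hε => key ε hε)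

end Paraboloid

section Measure

variable {E : Type*} [NormedAddCommGroup E] [NormedSpace ℝ E] [MeasurableSpace E] [BorelSpace E]

lemma measurable_fderiv_fderiv_apply (v : E → ℝ) (u w : E) :
    Measurable fun y => fderiv ℝ (fderiv ℝ v) y u w :=
  (ContinuousLinearMap.apply ℝ ℝ w).measurable.comp
    (measurable_fderiv_apply_const ℝ (fderiv ℝ v) u)

lemma MeasureTheory.Measure.addHaar_real_ball_zero [FiniteDimensional ℝ E] [Nontrivial E] (μ : Measure E)
    [μ.IsAddHaarMeasure] {r : ℝ} (hr : 0 ≤ r) :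
    μ.real (ball 0 r) = r ^ Module.finrank ℝ E * μ.real (ball 0 1) := by
  simp [measureReal_def, Measure.addHaar_ball _ _ hr, ENNReal.toReal_mul, hr]

/-- Tonelli on `B × (-a, a)`: the slices over `x ∈ B` are controlled by `hline`, and the slice
over each `t` contains a translate of `{y ∈ K | M < f y}`. -/
lemma measure_setOf_lt_le_of_forall_line [SecondCountableTopology E] (μ : Measure E)
    [μ.IsAddRightInvariant] [SFinite μ] {f : E → ℝ} (hf : Measurable f) {K B : Set E} {u : E}
    {a M : ℝ} {δ : ℝ≥0∞} (hB : MeasurableSet B)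
    (hKB : ∀ y ∈ K, ∀ t ∈ Ioo (-a) a, y - t • u ∈ B)
    (hline : ∀ x ∈ B, volume {t ∈ Ioo (-a) a | M < f (x + t • u)} ≤ δ) :
    ENNReal.ofReal (2 * a) * μ {y ∈ K | M < f y} ≤ δ * μ B := by
  set S : Set (E × ℝ) := {p | p.1 ∈ B ∧ p.2 ∈ Ioo (-a) a ∧ M < f (p.1 + p.2 • u)}
  have hS : MeasurableSet S :=
    (measurable_fst hB).inter ((measurable_snd measurableSet_Ioo).inter
      (measurableSet_lt measurable_const (hf.comp (by fun_prop))))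
  have lower : ENNReal.ofReal (2 * a) * μ {y ∈ K | M < f y} ≤ μ.prod volume S := by
    rw [Measure.prod_apply_symm hS]
    calc ENNReal.ofReal (2 * a) * μ {y ∈ K | M < f y}
        = ∫⁻ _ in Ioo (-a) a, μ {y ∈ K | M < f y} := by
          rw [setLIntegral_const, Real.volume_Ioo, mul_comm, sub_neg_eq_add, two_mul]
      _ ≤ ∫⁻ t in Ioo (-a) a, μ ((fun x => (x, t)) ⁻¹' S) := by
          refine setLIntegral_mono' measurableSet_Ioo fun t ht => ?_
          rw [← measure_preimage_add_right μ (t • u)]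
          refine measure_mono fun x hx => ⟨?_, ht, hx.2⟩
          simpa using hKB _ hx.1 t ht
      _ ≤ ∫⁻ t, μ ((fun x => (x, t)) ⁻¹' S) := setLIntegral_le_lintegral _ _
  have upper : μ.prod volume S ≤ δ * μ B := by
    rw [Measure.prod_apply hS, ← lintegral_indicator_const hB]
    refine lintegral_mono fun x => ?_
    by_cases hx : x ∈ B
    · rw [indicator_of_mem hx]
      refine le_trans (measure_mono fun t ht => ?_) (hline x hx)
      exact ⟨ht.2.1, ht.2.2⟩
    · rw [indicator_of_notMem hx, nonpos_iff_eq_zero, measure_eq_zero_iff_ae_notMem]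
      exact ae_of_all _ fun t ht => hx ht.1
  exact lower.trans upper

end Measure

section NormalizedDomain

variable {E : Type*} [NormedAddCommGroup E] [NormedSpace ℝ E] {Z : Set E} {v : E → ℝ} {C M : ℝ}
  (hZ : IsOpen Z) (hZ1 : ball 0 1 ⊆ Z) (hconv : ConvexOn ℝ Z v) (hv : ContDiffOn ℝ 2 v Z)
  (hC : ∀ z ∈ Z, |v z| ≤ C) (hM : 0 < M)
include hZ hZ1 hconv hv hC hM

lemma volume_setOf_lt_fderiv_fderiv_comp_add_smul_le {x u : E} (hx : x ∈ ball 0 (1 / 4))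
    (hu : ‖u‖ = 1) :
    volume {t ∈ Ioo (-(1 / 8) : ℝ) (1 / 8) | M < fderiv ℝ (fderiv ℝ v) (x + t • u) u u} ≤
      ENNReal.ofReal (8 * C / M) := by
  have hmem : ∀ t ∈ Icc (-(1 / 8) - 1 / 2 : ℝ) (1 / 8 + 1 / 2), x + t • u ∈ Z := by
    intro t ht
    apply hZ1
    rw [mem_ball_zero_iff] at hx ⊢
    have ht' : |t| ≤ 5 / 8 := abs_le.2 ⟨by linarith [ht.1], by linarith [ht.2]⟩
    calc ‖x + t • u‖ ≤ ‖x‖ + |t| := by simpa [norm_smul, hu] using norm_add_le x (t • u)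
      _ < 1 := by linarith
  have hsub : Icc (-(1 / 8) : ℝ) (1 / 8) ⊆ Icc (-(1 / 8) - 1 / 2) (1 / 8 + 1 / 2) :=
    Icc_subset_Icc (by norm_num) (by norm_num)
  have hslopes := ((hconv.comp_add_smul x u).subset hmem (convex_Icc _ _)
    ).sub_le_of_hasDerivAt_of_abs_le (g' := fun s => fderiv ℝ v (x + s • u) u)
    (by norm_num) (by norm_num) (fun s hs => hC _ (hmem s hs))
    (hv.hasDerivAt_comp_add_smul hZ (hmem _ (hsub ⟨le_rfl, by norm_num⟩)))
    (hv.hasDerivAt_comp_add_smul hZ (hmem _ (hsub ⟨by norm_num, le_rfl⟩)))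
  have hcont : ContinuousOn (fun s : ℝ => fderiv ℝ (fderiv ℝ v) (x + s • u) u u)
      (Icc (-(1 / 8)) (1 / 8)) :=
    ((hv.continuousOn_fderiv_fderiv hZ).comp (by fun_prop) fun s hs => hmem s (hsub hs)
      ).clm_apply continuousOn_const |>.clm_apply continuousOn_const
  calc _ ≤ ENNReal.ofReal ((fderiv ℝ v (x + (1 / 8 : ℝ) • u) u
          - fderiv ℝ v (x + (-(1 / 8) : ℝ) • u) u) / M) :=
        volume_setOf_lt_le_of_hasDerivAt (by norm_num) hM
          (fun s hs => hv.hasDerivAt_fderiv_comp_add_smul hZ (hmem s (hsub hs))) hcont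
          (fun s hs => hconv.fderiv_fderiv_self_nonneg hZ hv (hmem s (hsub hs)) u)
    _ ≤ ENNReal.ofReal (8 * C / M) := by
      gcongr
      linarith

lemma measure_setOf_lt_fderiv_fderiv_le [MeasurableSpace E] [BorelSpace E]
    [SecondCountableTopology E] (μ : Measure E) [μ.IsAddRightInvariant] [SFinite μ] {u : E}
    (hu : ‖u‖ = 1) :
    μ {y ∈ ball 0 (1 / 8) | M < fderiv ℝ (fderiv ℝ v) y u u} ≤
      ENNReal.ofReal (32 * C / M) * μ (ball 0 (1 / 4)) := by
  have hball : ∀ y ∈ ball (0 : E) (1 / 8), ∀ t ∈ Ioo (-(1 / 8) : ℝ) (1 / 8),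
      y - t • u ∈ ball (0 : E) (1 / 4) := by
    intro y hy t ht
    rw [mem_ball_zero_iff] at hy ⊢
    have ht' : |t| < 1 / 8 := abs_lt.2 ht
    calc ‖y - t • u‖ ≤ ‖y‖ + |t| := by simpa [norm_smul, hu] using norm_sub_le y (t • u)
      _ < 1 / 4 := by linarith
  have h := measure_setOf_lt_le_of_forall_line μ (measurable_fderiv_fderiv_apply v u u)
    measurableSet_ball hball fun x hx =>
      volume_setOf_lt_fderiv_fderiv_comp_add_smul_le hZ hZ1 hconv hv hC hM hx hu
  calc _ = ENNReal.ofReal 4 * (ENNReal.ofReal (2 * (1 / 8)) *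
        μ {y ∈ ball 0 (1 / 8) | M < fderiv ℝ (fderiv ℝ v) y u u}) := by
        rw [← mul_assoc, ← ENNReal.ofReal_mul (by norm_num)]
        norm_num
    _ ≤ ENNReal.ofReal 4 * (ENNReal.ofReal (8 * C / M) * μ (ball 0 (1 / 4))) := by gcongr
    _ = _ := by
        rw [← mul_assoc, ← ENNReal.ofReal_mul (by norm_num)]
        ring_nf

end NormalizedDomain

section Hessian

variable {n : ℕ} {Z : Set (EuclideanSpace ℝ (Fin n))} {v : EuclideanSpace ℝ (Fin n) → ℝ}
  {x : EuclideanSpace ℝ (Fin n)}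

lemma hessMatrix_apply (i j : Fin n) :
    hessMatrix v x i j =
      fderiv ℝ (fderiv ℝ v) x (EuclideanSpace.single i 1) (EuclideanSpace.single j 1) := by
  simp [hessMatrix, iteratedFDeriv_two_apply]

lemma inner_toEuclideanCLM_hessMatrix (ξ : EuclideanSpace ℝ (Fin n)) :
    ⟪Matrix.toEuclideanCLM (𝕜 := ℝ) (hessMatrix v x) ξ, ξ⟫ = fderiv ℝ (fderiv ℝ v) x ξ ξ := by
  rw [real_inner_comm, Matrix.inner_toEuclideanCLM]
  conv_rhs => rw [← (EuclideanSpace.basisFun (Fin n) ℝ).sum_repr' ξ]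
  simp only [map_sum, map_smul, _root_.sum_apply, _root_.smul_apply,
    EuclideanSpace.basisFun_apply, EuclideanSpace.inner_single_left, dotProduct, Matrix.mulVec,
    hessMatrix_apply, Finset.mul_sum, smul_eq_mul, map_one, one_mul]
  rw [Finset.sum_comm]
  exact Finset.sum_congr rfl fun i _ => Finset.sum_congr rfl fun j _ => by ring

lemma isHermitian_hessMatrix (hZ : IsOpen Z) (hv : ContDiffOn ℝ 2 v Z) (hx : x ∈ Z) :
    (hessMatrix v x).IsHermitian := by
  have hsymm := (hv.contDiffAt (hZ.mem_nhds hx)).isSymmSndFDerivAt (by simp)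
  ext i j
  simp [hessMatrix_apply, hsymm (EuclideanSpace.single i 1)]

lemma paraboloid_le_of_hessDet_lt {R c : ℝ} (hZ : IsOpen Z) (hZR : Z ⊆ ball 0 R)
    (hcont : ContinuousOn v (closure Z)) (hv : ContDiffOn ℝ 2 v Z)
    (hfr : ∀ x ∈ frontier Z, v x = 0) (hc : 0 ≤ c) (hdet : ∀ x ∈ Z, hessDet v x < (2 * c) ^ n)
    {z : EuclideanSpace ℝ (Fin n)} (hz : z ∈ Z) : c * (‖z‖ ^ 2 - R ^ 2) ≤ v z := by
  by_contra! hlt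
  obtain ⟨x₀, hx₀, hge⟩ :=
    exists_forall_le_fderiv_fderiv_of_lt_paraboloid hZ hZR hcont hv hfr hc hz hlt
  have hdet₀ := (isHermitian_hessMatrix hZ hv hx₀).pow_card_le_det (by positivity)
    fun ξ => (inner_toEuclideanCLM_hessMatrix ξ).symm ▸ hge ξ
  rw [Fintype.card_fin] at hdet₀
  exact (hdet x₀ hx₀).not_ge hdet₀

lemma abs_le_of_hessDet_le [NeZero n] {R Λ : ℝ} (hZ : IsOpen Z) (hZR : Z ⊆ ball 0 R)
    (hcont : ContinuousOn v (closure Z)) (hconv : ConvexOn ℝ Z v) (hv : ContDiffOn ℝ 2 v Z)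
    (hfr : ∀ x ∈ frontier Z, v x = 0) (hΛ : 0 ≤ Λ) (hdet : ∀ x ∈ Z, hessDet v x ≤ Λ)
    {z : EuclideanSpace ℝ (Fin n)} (hz : z ∈ Z) : |v z| ≤ (Λ + 1) / 2 * R ^ 2 := by
  have hpow : Λ < (2 * ((Λ + 1) / 2)) ^ n := by
    rw [show 2 * ((Λ + 1) / 2) = Λ + 1 by ring]
    exact (lt_add_one Λ).trans_le (le_self_pow₀ (by linarith) (NeZero.ne n))
  have hlow := paraboloid_le_of_hessDet_lt hZ hZR hcont hv hfr (by positivity)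
    (fun x hx => (hdet x hx).trans_lt hpow) hz
  have hup := hconv.nonpos_of_eq_zero_on_frontier hZ hZR hcont hv hfr hz
  rw [abs_le]
  constructor <;> nlinarith [sq_nonneg ‖z‖]

variable (hZ : IsOpen Z) (hconv : ConvexOn ℝ Z v) (hv : ContDiffOn ℝ 2 v Z)
include hZ hconv hv

lemma exists_subset_ball_forall_hessMatrix_le [NeZero n] (hZ1 : ball 0 1 ⊆ Z) {C : ℝ}
    (hC0 : 0 < C) (hC : ∀ z ∈ Z, |v z| ≤ C) :
    ∃ E ⊆ ball (0 : EuclideanSpace ℝ (Fin n)) (1 / 8), MeasurableSet E ∧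
      volume.real (ball (0 : EuclideanSpace ℝ (Fin n)) (1 / 8)) / 2 ≤ volume.real E ∧
      ∀ y ∈ E, ∀ i, hessMatrix v y i i ≤ 2 ^ (n + 6) * n * C := by
  -- `M` is chosen so that each of the `n` sets `bad i` has measure at most `|B| / (2n)`.
  set M : ℝ := 2 ^ (n + 6) * n * C with hMdef
  set B := ball (0 : EuclideanSpace ℝ (Fin n)) (1 / 8) with hBdef
  set bad := fun i : Fin n => {y ∈ B | M < hessMatrix v y i i}
  have hn : (0 : ℝ) < n := by exact_mod_cast Nat.pos_of_neZero n
  have hbad i : volume.real (bad i) ≤ volume.real B / (2 * n) := by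
    have h := ENNReal.toReal_mono (by finiteness) (measure_setOf_lt_fderiv_fderiv_le hZ hZ1 hconv
      hv hC (M := M) (by positivity) volume (u := EuclideanSpace.single i 1) (by simp))
    rw [ENNReal.toReal_mul, ENNReal.toReal_ofReal (by positivity), ← measureReal_def,
      ← measureReal_def, Measure.addHaar_real_ball_zero _ (by norm_num)] at h
    simp only [bad, hessMatrix_apply]
    refine h.trans (le_of_eq ?_)
    rw [hBdef, hMdef, Measure.addHaar_real_ball_zero _ (r := 1 / 8) (by norm_num),
      finrank_euclideanSpace_fin, show (1 / 4 : ℝ) ^ n = 2 ^ n * (1 / 8) ^ n by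
        rw [← mul_pow]; norm_num]
    field_simp
    ring
  have hmeas i : MeasurableSet (bad i) := by
    have hf : Measurable fun y => hessMatrix v y i i := by
      simpa only [hessMatrix_apply] using measurable_fderiv_fderiv_apply v _ _
    exact measurableSet_ball.inter (measurableSet_lt measurable_const hf)
  refine ⟨B \ ⋃ i, bad i, sdiff_subset, measurableSet_ball.diff (MeasurableSet.iUnion hmeas), ?_,
    fun y hy i => not_lt.1 fun hlt => hy.2 (mem_iUnion.2 ⟨i, hy.1, hlt⟩)⟩
  calc volume.real B / 2 = volume.real B - ∑ _i : Fin n, volume.real B / (2 * n) := by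
        simp only [Finset.sum_const, Finset.card_univ, Fintype.card_fin, nsmul_eq_mul]
        field_simp
        ring
    _ ≤ volume.real B - volume.real (⋃ i, bad i) := by
        gcongr
        exact (measureReal_iUnion_fintype_le bad).trans (Finset.sum_le_sum fun i _ => hbad i)
    _ ≤ volume.real (B \ ⋃ i, bad i) := le_measureReal_sdiff
          (measure_ne_top_of_subset (iUnion_subset fun i => sep_subset _ _) measure_ball_lt_top.ne)

lemma div_pow_mul_le_inner_hessMatrix [NeZero n] (hx : x ∈ Z) {d T : ℝ} (hT : 0 < T)
    (hdiag : ∀ i, hessMatrix v x i i ≤ T) (hdet : d ≤ hessDet v x) (ξ : EuclideanSpace ℝ (Fin n)) :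
    d / (n * T) ^ (n - 1) * ‖ξ‖ ^ 2 ≤ ⟪Matrix.toEuclideanCLM (𝕜 := ℝ) (hessMatrix v x) ξ, ξ⟫ := by
  have hn : (0 : ℝ) < n := by exact_mod_cast Nat.pos_of_neZero n
  have htr : (hessMatrix v x).trace ≤ n * T := by
    simpa [Matrix.trace] using Finset.sum_le_sum fun i (_ : i ∈ Finset.univ) => hdiag i
  simpa using (isHermitian_hessMatrix hZ hv hx).div_pow_mul_le_inner_of_trace_le (by positivity)
    (fun ξ => (inner_toEuclideanCLM_hessMatrix ξ).symm ▸
      hconv.fderiv_fderiv_self_nonneg hZ hv hx ξ) htr hdet ξ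

end Hessian

theorem uniform_hessian_lower_bound_on_large_set (n : ℕ) (hn : 1 ≤ n) (lam Lam : ℝ)
    (hlam : 0 < lam) (hlL : lam ≤ Lam) :
    ∃ c' > 0, ∃ c'' > 0,
      ∀ (Z : Set (EuclideanSpace ℝ (Fin n))) (v : EuclideanSpace ℝ (Fin n) → ℝ),
      IsNormalized Z →
      ContinuousOn v (closure Z) → ConvexOn ℝ Z v → ContDiffOn ℝ 2 v Z →
      (∀ x ∈ frontier Z, v x = 0) →
      (∀ x ∈ Z, lam ≤ hessDet v x ∧ hessDet v x ≤ Lam) →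
      ∃ E : Set (EuclideanSpace ℝ (Fin n)), MeasurableSet E ∧ E ⊆ Z ∧
        c' * (volume Z).toReal ≤ (volume E).toReal ∧
        ∀ x ∈ E, ∀ ξ : EuclideanSpace ℝ (Fin n),
          c'' * ‖ξ‖ ^ 2 ≤ (inner ℝ ((Matrix.toEuclideanCLM (𝕜 := ℝ) (hessMatrix v x)) ξ) ξ : ℝ) := by
  have : NeZero n := ⟨by omega⟩
  have hn' : (0 : ℝ) < n := by exact_mod_cast hn
  have hLam : 0 ≤ Lam := by linarith
  set C : ℝ := (Lam + 1) / 2 * n ^ 2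
  refine ⟨1 / (2 * (8 * n) ^ n), by positivity, lam / (n * (2 ^ (n + 6) * n * C)) ^ (n - 1),
    by positivity, ?_⟩
  rintro Z v ⟨hZ, -, hZ1, hZn⟩ hcont hconv hv hfr hdet
  obtain ⟨E, hEB, hEm, hEvol, hEdiag⟩ := exists_subset_ball_forall_hessMatrix_le hZ hconv hv hZ1
    (by positivity) fun z hz => abs_le_of_hessDet_le hZ hZn hcont hconv hv hfr hLam
      (fun x hx => (hdet x hx).2) hz
  have hEZ : E ⊆ Z := hEB.trans ((ball_subset_ball (by norm_num)).trans hZ1)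
  refine ⟨E, hEm, hEZ, ?_, fun x hx ξ => div_pow_mul_le_inner_hessMatrix hZ hconv hv (hEZ hx)
    (by positivity) (hEdiag x hx) (hdet x (hEZ hx)).1 ξ⟩
  rw [← measureReal_def, ← measureReal_def]
  calc 1 / (2 * (8 * n) ^ n) * volume.real Z
      ≤ 1 / (2 * (8 * n) ^ n) * volume.real (ball (0 : EuclideanSpace ℝ (Fin n)) n) := by
        gcongr
        exact measure_ball_lt_top.ne
    _ = volume.real (ball (0 : EuclideanSpace ℝ (Fin n)) (1 / 8)) / 2 := by
        rw [Measure.addHaar_real_ball_zero _ hn'.le,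
          Measure.addHaar_real_ball_zero _ (r := 1 / 8) (by norm_num), finrank_euclideanSpace_fin,
          mul_pow, one_div_pow]
        field_simp
    _ ≤ volume.real E := hEvol
end

section
/- Let Ω ⊆ ℝⁿ be open and convex, let u : Ω → ℝ be convex and differentiable, let x ∈ Ω and t > 0, and suppose S(x,2t) ⊆ Ω. Let T be an invertible affine map such that B(0,1) ⊆ T(S(x,t)) ⊆ B(0,n). Then B(0,1) ⊆ T(S(x,2t)) ⊆ B(0,3n). -/
open MeasureTheory Metric Set
open scoped Pointwise

/-- The section of `u` centered at `x` with height `t`: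
`S(x,t) = {y ∈ Ω : u y ≤ u x + ∇u(x)·(y-x) + t}`. -/
noncomputable def sect {n : ℕ} (Ω : Set (EuclideanSpace ℝ (Fin n)))
    (u : EuclideanSpace ℝ (Fin n) → ℝ) (x : EuclideanSpace ℝ (Fin n)) (t : ℝ) :
    Set (EuclideanSpace ℝ (Fin n)) :=
  {y ∈ Ω | u y ≤ u x + (inner ℝ (gradient u x) (y - x) : ℝ) + t}

/-- Dilation of a set by a factor `τ` with respect to the point `x`:
`τ S = {y : x + (y-x)/τ ∈ S}`. -/
def dilate {n : ℕ} (x : EuclideanSpace ℝ (Fin n)) (τ : ℝ)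
    (s : Set (EuclideanSpace ℝ (Fin n))) : Set (EuclideanSpace ℝ (Fin n)) :=
  {y | x + τ⁻¹ • (y - x) ∈ s}

/-!
Convexity of `u` on the segment from `x` to `y ∈ S(x,2t)` puts the midpoint of `x` and `y` in
`S(x,t)`. As `T` preserves midpoints, `T y = 2 T(midpoint x y) - T x` with both `T x` and
`T(midpoint x y)` in `B(0,n)`, so `‖T y‖ < 3n`. The inner inclusion is just `S(x,t) ⊆ S(x,2t)`.
-/

section Sections

variable {n : ℕ} {Ω : Set (EuclideanSpace ℝ (Fin n))} {u : EuclideanSpace ℝ (Fin n) → ℝ}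
  {x : EuclideanSpace ℝ (Fin n)}

theorem sect_mono {s t : ℝ} (hst : s ≤ t) : sect Ω u x s ⊆ sect Ω u x t :=
  fun _ hy => ⟨hy.1, hy.2.trans (by gcongr)⟩

theorem self_mem_sect (hx : x ∈ Ω) {t : ℝ} (ht : 0 ≤ t) : x ∈ sect Ω u x t :=
  ⟨hx, by simpa using ht⟩

theorem lineMap_mem_sect (hu : ConvexOn ℝ Ω u) (hx : x ∈ Ω) {y : EuclideanSpace ℝ (Fin n)}
    {s c : ℝ} (hy : y ∈ sect Ω u x s) (hc₀ : 0 ≤ c) (hc₁ : c ≤ 1) :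
    AffineMap.lineMap x y c ∈ sect Ω u x (c * s) := by
  refine ⟨hu.1.lineMap_mem hx hy.1 ⟨hc₀, hc₁⟩, ?_⟩
  have hconv : u (AffineMap.lineMap x y c) ≤ (1 - c) * u x + c * u y := by
    simpa [AffineMap.lineMap_apply_module] using
      hu.2 hx hy.1 (sub_nonneg.2 hc₁) hc₀ (sub_add_cancel 1 c)
  rw [← vsub_eq_sub, AffineMap.lineMap_vsub_left, vsub_eq_sub, real_inner_smul_right]
  linarith [mul_le_mul_of_nonneg_left hy.2 hc₀]

theorem midpoint_mem_sect (hu : ConvexOn ℝ Ω u) (hx : x ∈ Ω) {y : EuclideanSpace ℝ (Fin n)}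
    {t : ℝ} (hy : y ∈ sect Ω u x (2 * t)) : midpoint ℝ x y ∈ sect Ω u x t := by
  have h := lineMap_mem_sect hu hx hy (c := ⅟2) (by norm_num) (by norm_num)
  rwa [invOf_mul_cancel_left] at h

end Sections

theorem norm_right_le_two_mul_norm_midpoint_add {E : Type*} [NormedAddCommGroup E]
    [NormedSpace ℝ E] (a b : E) : ‖b‖ ≤ 2 * ‖midpoint ℝ a b‖ + ‖a‖ := by
  have hb : b = (2 : ℝ) • midpoint ℝ a b - a := by
    rw [two_smul, midpoint_add_self, add_sub_cancel_left]
  calc ‖b‖ = ‖(2 : ℝ) • midpoint ℝ a b - a‖ := by rw [← hb]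
    _ ≤ ‖(2 : ℝ) • midpoint ℝ a b‖ + ‖a‖ := norm_sub_le _ _
    _ = 2 * ‖midpoint ℝ a b‖ + ‖a‖ := by rw [norm_smul, Real.norm_two]

theorem normalizing_map_almost_normalizes_double_section_general
    (n : ℕ) (Ω : Set (EuclideanSpace ℝ (Fin n)))
    (u : EuclideanSpace ℝ (Fin n) → ℝ)
    (huconv : ConvexOn ℝ Ω u)
    (x : EuclideanSpace ℝ (Fin n)) (hx : x ∈ Ω) (t : ℝ) (ht : 0 < t)
    (T : EuclideanSpace ℝ (Fin n) →ᵃ[ℝ] EuclideanSpace ℝ (Fin n))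
    (hT1 : ball (0 : EuclideanSpace ℝ (Fin n)) 1 ⊆ T '' sect Ω u x t)
    (hTn : T '' sect Ω u x t ⊆ ball (0 : EuclideanSpace ℝ (Fin n)) n) :
    ball (0 : EuclideanSpace ℝ (Fin n)) 1 ⊆ T '' sect Ω u x (2 * t) ∧
      T '' sect Ω u x (2 * t) ⊆ ball (0 : EuclideanSpace ℝ (Fin n)) (3 * n) := by
  refine ⟨hT1.trans (image_mono (sect_mono (by linarith))), ?_⟩
  rintro _ ⟨y, hy, rfl⟩
  have hTx := hTn (mem_image_of_mem T (self_mem_sect hx ht.le))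
  have hTm := hTn (mem_image_of_mem T (midpoint_mem_sect huconv hx hy))
  rw [mem_ball_zero_iff] at hTx hTm ⊢
  calc ‖T y‖ ≤ 2 * ‖midpoint ℝ (T x) (T y)‖ + ‖T x‖ :=
        norm_right_le_two_mul_norm_midpoint_add _ _
    _ = 2 * ‖T (midpoint ℝ x y)‖ + ‖T x‖ := by rw [T.map_midpoint]
    _ < 3 * n := by linarith

theorem normalizing_map_almost_normalizes_double_section
    (n : ℕ) (Ω : Set (EuclideanSpace ℝ (Fin n)))
    (hΩopen : IsOpen Ω) (hΩconv : Convex ℝ Ω)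
    (u : EuclideanSpace ℝ (Fin n) → ℝ)
    (huconv : ConvexOn ℝ Ω u) (hudiff : DifferentiableOn ℝ u Ω)
    (x : EuclideanSpace ℝ (Fin n)) (hx : x ∈ Ω) (t : ℝ) (ht : 0 < t)
    (h2t : sect Ω u x (2 * t) ⊆ Ω)
    (T : EuclideanSpace ℝ (Fin n) →ᵃ[ℝ] EuclideanSpace ℝ (Fin n))
    (hT : Function.Bijective T)
    (hT1 : ball (0 : EuclideanSpace ℝ (Fin n)) 1 ⊆ T '' sect Ω u x t)
    (hTn : T '' sect Ω u x t ⊆ ball (0 : EuclideanSpace ℝ (Fin n)) n) :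
    ball (0 : EuclideanSpace ℝ (Fin n)) 1 ⊆ T '' sect Ω u x (2 * t) ∧
      T '' sect Ω u x (2 * t) ⊆ ball (0 : EuclideanSpace ℝ (Fin n)) (3 * n) :=
  normalizing_map_almost_normalizes_double_section_general n Ω u huconv x hx t ht T hT1 hTn
end
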